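/- arXiv:2303.06781 — 9 statements merged into one kernel-verified Lean document; each statement's English description precedes it below -/
import Mathlib

section
/- Let M be a monoid, let 𝔭 ⊆ M be a prime ideal, and let S be the submonoid of M whose carrier is the complement M \ 𝔭. Assume S is a right Ore set in M (so that the Ore localization M[S⁻¹] = OreLocalization S M exists, together with the canonical monoid homomorphism M → M[S⁻¹]). Then for every m ∈ M, the image of m in M[S⁻¹] is a unit if and only if m ∉ 𝔭. -/
/-- A prime ideal of a (not necessarily commutative) monoid `M`: a two-sided
ideal not containing `1` such that `a * b ∈ 𝔭` implies `a ∈ 𝔭` or `b ∈ 𝔭`. -/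
def IsPrimeIdeal {M : Type*} [Monoid M] (𝔭 : Set M) : Prop :=
  (1 : M) ∉ 𝔭 ∧ (∀ m x : M, x ∈ 𝔭 → m * x ∈ 𝔭 ∧ x * m ∈ 𝔭) ∧
    ∀ a b : M, a * b ∈ 𝔭 → a ∈ 𝔭 ∨ b ∈ 𝔭

/-- For `𝔭` a prime ideal of `M` and `S` the complementary submonoid, assumed to
be a right Ore set, an element `m : M` becomes a unit in the Ore localization
`M[S⁻¹]` if and only if `m ∉ 𝔭`. -/
theorem isUnit_oreLocalization_iff_not_mem_primeIdeal
    (M : Type*) [Monoid M] (𝔭 : Set M) (h𝔭 : IsPrimeIdeal 𝔭)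
    (S : Submonoid M) (hS : (S : Set M) = 𝔭ᶜ) [OreLocalization.OreSet S] :
    ∀ m : M, IsUnit (OreLocalization.numeratorHom m : OreLocalization S M) ↔ m ∉ 𝔭 := by
  intro m
  constructor
  · rintro ⟨u, hu⟩ hm
    -- m ∈ 𝔭; derive a contradiction
    have hinv : (↑u⁻¹ : OreLocalization S M) * OreLocalization.numeratorHom m = 1 := by
      rw [← hu]; exact u.inv_mul
    obtain ⟨n, s, hv⟩ : ∃ (n : M) (s : S), (↑u⁻¹ : OreLocalization S M) = n /ₒ s := by
      induction (↑u⁻¹ : OreLocalization S M) using OreLocalization.ind with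
      | _ n s => exact ⟨n, s, rfl⟩
    rw [hv] at hinv
    rw [OreLocalization.numeratorHom_apply] at hinv
    have hmul : (n /ₒ s) * (m /ₒ (1 : S)) = (n * m) /ₒ (1 * s) :=
      OreLocalization.oreDiv_mul_char n m s 1 n 1 (by simp)
    rw [hmul, OreLocalization.one_def, OreLocalization.oreDiv_eq_iff] at hinv
    obtain ⟨v, w, h1, _⟩ := hinv
    have hvw : (v : M) = w * (n * m) := by simpa [Submonoid.smul_def] using h1
    have hvp : (v : M) ∈ 𝔭 := by
      rw [hvw]
      exact (h𝔭.2.1 w (n * m) (h𝔭.2.1 n m hm).1).1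
    have hvS : (v : M) ∈ (S : Set M) := v.2
    rw [hS] at hvS
    exact hvS hvp
  · intro hm
    have hmS : m ∈ S := by rw [← SetLike.mem_coe, hS]; exact hm
    exact OreLocalization.numerator_isUnit ⟨m, hmS⟩
end

section
/- Let α be a type and let M = FreeMonoid α be the free monoid on α (whose elements are words, i.e. lists, over α). A subset 𝔭 ⊆ M is a prime ideal if and only if there exists a subset J ⊆ α such that 𝔭 = {w ∈ M : some letter of w belongs to J} (equivalently, 𝔭 is the union over j ∈ J of the two-sided ideals M·j·M). -/
namespace IsPrimeIdeal

variable {M : Type*} [Monoid M] {𝔭 : Set M}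

theorem mul_mem_iff (h𝔭 : IsPrimeIdeal 𝔭) {a b : M} : a * b ∈ 𝔭 ↔ a ∈ 𝔭 ∨ b ∈ 𝔭 :=
  ⟨h𝔭.2.2 a b, fun hab => hab.elim (fun ha => (h𝔭.2.1 b a ha).2) fun hb => (h𝔭.2.1 a b hb).1⟩

theorem list_prod_mem_iff (h𝔭 : IsPrimeIdeal 𝔭) (l : List M) :
    l.prod ∈ 𝔭 ↔ ∃ x ∈ l, x ∈ 𝔭 := by
  induction l with
  | nil => simpa using h𝔭.1
  | cons x l ih => simp [List.prod_cons, h𝔭.mul_mem_iff, ih]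

end IsPrimeIdeal

namespace FreeMonoid

variable {α : Type*}

theorem prod_map_of_toList (w : FreeMonoid α) : (w.toList.map of).prod = w := by
  rw [← lift_apply]
  exact DFunLike.congr_fun (lift_restrict (MonoidHom.id _)) w

theorem isPrimeIdeal_setOf_exists_mem (J : Set α) :
    IsPrimeIdeal {w : FreeMonoid α | ∃ a ∈ J, a ∈ w} := by
  refine ⟨fun ⟨_, _, h⟩ => notMem_one h, ?_, ?_⟩
  · rintro m x ⟨a, ha, hax⟩
    exact ⟨⟨a, ha, mem_mul.2 (.inr hax)⟩, ⟨a, ha, mem_mul.2 (.inl hax)⟩⟩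
  · rintro u v ⟨a, ha, hauv⟩
    exact (mem_mul.1 hauv).imp (fun hau => ⟨a, ha, hau⟩) fun hav => ⟨a, ha, hav⟩

theorem _root_.IsPrimeIdeal.mem_freeMonoid_iff {𝔭 : Set (FreeMonoid α)} (h𝔭 : IsPrimeIdeal 𝔭)
    (w : FreeMonoid α) : w ∈ 𝔭 ↔ ∃ a ∈ w, of a ∈ 𝔭 := by
  conv_lhs => rw [← prod_map_of_toList w]
  simp only [h𝔭.list_prod_mem_iff, List.mem_map, exists_exists_and_eq_and]
  rfl

end FreeMonoid

/-- The prime ideals of the free monoid on `α` are exactly the sets of words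
containing some letter from a fixed subset `J ⊆ α`. -/
theorem primeIdeal_freeMonoid_iff (α : Type*) (𝔭 : Set (FreeMonoid α)) :
    IsPrimeIdeal 𝔭 ↔
      ∃ J : Set α, 𝔭 = {w : FreeMonoid α | ∃ a ∈ J, a ∈ FreeMonoid.toList w} := by
  constructor
  · intro h𝔭
    refine ⟨{a | FreeMonoid.of a ∈ 𝔭}, Set.ext fun w => ?_⟩
    rw [h𝔭.mem_freeMonoid_iff]
    exact ⟨fun ⟨a, haw, ha⟩ => ⟨a, ha, haw⟩, fun ⟨a, ha, haw⟩ => ⟨a, haw, ha⟩⟩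
  · rintro ⟨J, rfl⟩
    exact FreeMonoid.isPrimeIdeal_setOf_exists_mem J
end

section
/- Let α be a type with at least two distinct elements, let M = FreeMonoid α be the free monoid on α, and let S ⊆ M be a submonoid. Then M is right Ore with respect to S if and only if S is the trivial submonoid {1}. -/
/-- The free monoid on a type with at least two distinct elements is right Ore
with respect to a submonoid `S` if and only if `S` is the trivial submonoid. -/
theorem freeMonoid_rightOre_iff_trivial (α : Type*) (hα : ∃ a b : α, a ≠ b)
    (S : Submonoid (FreeMonoid α)) :
    (∀ m : FreeMonoid α, ∀ s ∈ S, ∃ t ∈ S, ∃ n : FreeMonoid α, m * t = s * n) ↔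
      S = ⊥ := by
  constructor
  · intro h
    rw [Submonoid.eq_bot_iff_forall]
    intro s hs
    by_contra hne
    -- s, as a list, is nonempty
    have hsl : FreeMonoid.toList s ≠ [] := by
      intro hnil
      apply hne
      have : FreeMonoid.toList s = FreeMonoid.toList (1 : FreeMonoid α) := hnil
      exact FreeMonoid.toList.injective this
    obtain ⟨x, xs, hx⟩ := List.exists_cons_of_ne_nil hsl
    obtain ⟨a, b, hab⟩ := hα
    -- pick c ≠ x
    obtain ⟨c, hc⟩ : ∃ c : α, c ≠ x := by
      by_cases hax : a = x
      · exact ⟨b, by simpa [hax] using hab.symm⟩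
      · exact ⟨a, hax⟩
    obtain ⟨t, ht, n, heq⟩ := h (FreeMonoid.of c) s hs
    have heq' : FreeMonoid.toList (FreeMonoid.of c * t)
        = FreeMonoid.toList (s * n) := by rw [heq]
    rw [FreeMonoid.toList_mul, FreeMonoid.toList_mul, FreeMonoid.toList_of, hx] at heq'
    simp at heq'
    exact hc heq'.1
  · intro h m s hs
    rw [h, Submonoid.mem_bot] at hs
    exact ⟨1, one_mem _, m, by rw [hs, one_mul, mul_one]⟩
end

section
/- Let M be the multiplicative monoid of 2×2 integer matrices with nonzero determinant (the submonoid {A : Matrix (Fin 2) (Fin 2) ℤ | det A ≠ 0} of the multiplicative monoid of 2×2 integer matrices). A subset 𝔮 ⊆ M is a prime ideal if and only if there exists a set Σ of prime numbers such that 𝔮 = {A ∈ M : there exists p ∈ Σ with (p : ℤ) ∣ det A}. -/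
/-- The multiplicative monoid of 2×2 integer matrices with nonzero determinant. -/
def M2ns : Submonoid (Matrix (Fin 2) (Fin 2) ℤ) where
  carrier := {A | A.det ≠ 0}
  one_mem' := by simp
  mul_mem' := by
    intro a b ha hb
    simp only [Set.mem_setOf_eq, Matrix.det_mul] at *
    exact mul_ne_zero ha hb

namespace M2nsAux
open Matrix

abbrev Mat := Matrix (Fin 2) (Fin 2) ℤ

def mk (A : Mat) (h : A.det ≠ 0) : M2ns := ⟨A, h⟩

@[simp] lemma mk_coe (A : Mat) (h : A.det ≠ 0) : ((mk A h : M2ns) : Mat) = A := rfl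

def scl (d : ℤ) : Mat := !![d, 0; 0, d]
def dP (d : ℤ) : Mat := !![d, 0; 0, 1]
def dQ (d : ℤ) : Mat := !![1, 0; 0, d]

@[simp] lemma det_scl (d : ℤ) : (scl d).det = d * d := by
  simp [scl, Matrix.det_fin_two_of]
@[simp] lemma det_dP (d : ℤ) : (dP d).det = d := by
  simp [dP, Matrix.det_fin_two_of]
@[simp] lemma det_dQ (d : ℤ) : (dQ d).det = d := by
  simp [dQ, Matrix.det_fin_two_of]

lemma det_scl_ne {d : ℤ} (hd : d ≠ 0) : (scl d).det ≠ 0 := by simp [hd]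

lemma scl_mul (d e : ℤ) : scl d * scl e = scl (d * e) := by
  simp [scl, Matrix.mul_fin_two]

lemma scl_one : scl 1 = (1 : Mat) := by
  ext i j
  fin_cases i <;> fin_cases j <;> simp [scl, Matrix.one_apply]

variable {𝔮 : Set M2ns}

lemma mem_congr {x y : M2ns} (hxy : (x : Mat) = (y : Mat)) (hx : x ∈ 𝔮) : y ∈ 𝔮 := by
  have : x = y := Subtype.ext hxy
  rwa [this] at hx

lemma conj_mem (h : IsPrimeIdeal 𝔮) (u v x : M2ns) (hx : x ∈ 𝔮) : u * x * v ∈ 𝔮 :=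
  (h.2.1 v (u * x) (h.2.1 u x hx).1).2

/-- If `x` has a right inverse, it is not in the prime ideal. -/
lemma not_mem_of_unit (h : IsPrimeIdeal 𝔮) (x y : M2ns) (hxy : x * y = 1) : x ∉ 𝔮 := by
  intro hx
  exact h.1 (hxy ▸ (h.2.1 y x hx).2)

/-- From a scalar matrix in `𝔮`, extract a prime scalar matrix in `𝔮`. -/
lemma exists_prime_of_scl_mem (h : IsPrimeIdeal 𝔮) :
    ∀ n : ℕ, ∀ d : ℤ, d.natAbs = n → ∀ hd : d ≠ 0, mk (scl d) (det_scl_ne hd) ∈ 𝔮 →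
      ∃ p : ℕ, ∃ hp : p.Prime, (p : ℤ) ∣ d ∧
        mk (scl (p : ℤ)) (det_scl_ne (by exact_mod_cast hp.ne_zero)) ∈ 𝔮 := by
  intro n
  induction n using Nat.strong_induction_on with
  | _ n ih =>
    intro d hdn hd hmem
    by_cases h1 : d.natAbs = 1
    · exfalso
      have hd1 : d = 1 ∨ d = -1 := by omega
      rcases hd1 with rfl | rfl
      · refine h.1 (mem_congr (x := mk (scl 1) (det_scl_ne one_ne_zero)) ?_ hmem)
        show scl 1 = ((1 : M2ns) : Mat)
        rw [scl_one]; rfl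
      · refine not_mem_of_unit h _ (mk (scl (-1)) (det_scl_ne (by norm_num))) ?_ hmem
        refine Subtype.ext ?_
        show scl (-1) * scl (-1) = ((1 : M2ns) : Mat)
        norm_num [scl_mul, scl_one]
    · obtain ⟨q, hq, e, rfl⟩ := Int.exists_prime_and_dvd h1
      have hq0 : q ≠ 0 := hq.ne_zero
      have he0 : e ≠ 0 := by rintro rfl; simp at hd
      have hsplit : mk (scl q) (det_scl_ne hq0) * mk (scl e) (det_scl_ne he0)
          = mk (scl (q * e)) (det_scl_ne hd) := Subtype.ext (scl_mul q e)
      have hdisj := h.2.2 _ _ (hsplit ▸ hmem)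
      rcases hdisj with hmq | hme
      · -- normalize the sign of q
        have hpn : q.natAbs.Prime := Int.prime_iff_natAbs_prime.mp hq
        refine ⟨q.natAbs, hpn, Int.natAbs_dvd.mpr ⟨e, rfl⟩, ?_⟩
        rcases Int.natAbs_eq q with heq | heq
        · refine mem_congr ?_ hmq
          show scl q = scl (q.natAbs : ℤ)
          exact congrArg scl heq
        · have hmm : mk (scl (-1)) (det_scl_ne (by norm_num)) * mk (scl q) (det_scl_ne hq0)
              = mk (scl ((q.natAbs : ℤ)))
                (det_scl_ne (by exact_mod_cast hpn.ne_zero)) := by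
            refine Subtype.ext ?_
            show scl (-1) * scl q = scl (q.natAbs : ℤ)
            rw [scl_mul, heq]
            norm_num
          exact hmm ▸ (h.2.1 _ _ hmq).1
      · have hlt : e.natAbs < n := by
          have h2 : 2 ≤ q.natAbs := (Int.prime_iff_natAbs_prime.mp hq).two_le
          have he1 : 1 ≤ e.natAbs := Int.natAbs_pos.mpr he0
          rw [← hdn, Int.natAbs_mul]
          exact lt_of_lt_of_le (by omega : e.natAbs < 2 * e.natAbs)
            (Nat.mul_le_mul_right _ h2)
        obtain ⟨p, hp, hpd, hpm⟩ := ih _ hlt e rfl he0 hme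
        exact ⟨p, hp, hpd.mul_left q, hpm⟩

/-- A member of `𝔮` yields its scalar determinant matrix in `𝔮`. -/
lemma scl_det_mem (h : IsPrimeIdeal 𝔮) (A : M2ns) (hA : A ∈ 𝔮) :
    mk (scl ((A : Mat).det)) (det_scl_ne A.2) ∈ 𝔮 := by
  have hadj : ((A : Mat).adjugate).det ≠ 0 := by
    rw [Matrix.det_adjugate]
    simpa using pow_ne_zero 1 A.2
  have hmul : mk ((A : Mat).adjugate) hadj * A = mk (scl ((A : Mat).det)) (det_scl_ne A.2) := by
    refine Subtype.ext ?_
    show (A : Mat).adjugate * (A : Mat) = scl ((A : Mat).det)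
    rw [Matrix.adjugate_mul]
    ext i j
    fin_cases i <;> fin_cases j <;> simp [scl, Matrix.one_apply]
  exact hmul ▸ (h.2.1 _ _ hA).1

/-- From the scalar matrix `p•1` in `𝔮`, get both diagonal prime matrices in `𝔮`. -/
lemma dP_dQ_mem (h : IsPrimeIdeal 𝔮) (p : ℤ) (hp0 : p ≠ 0)
    (hmem : mk (scl p) (det_scl_ne hp0) ∈ 𝔮) :
    mk (dP p) (by simpa using hp0) ∈ 𝔮 ∧ mk (dQ p) (by simpa using hp0) ∈ 𝔮 := by
  have hswap : (!![0,1;1,0] : Mat).det ≠ 0 := by norm_num [Matrix.det_fin_two_of]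
  set σ : M2ns := mk !![0,1;1,0] hswap with hσ
  have hsplit : mk (dP p) (by simpa using hp0) * mk (dQ p) (by simpa using hp0)
      = mk (scl p) (det_scl_ne hp0) := by
    refine Subtype.ext ?_
    show dP p * dQ p = scl p
    simp [dP, dQ, scl, Matrix.mul_fin_two]
  have hPQ : σ * mk (dP p) (by simpa using hp0) * σ = mk (dQ p) (by simpa using hp0) := by
    refine Subtype.ext ?_
    show !![0,1;1,0] * dP p * !![0,1;1,0] = dQ p
    simp [dP, dQ, Matrix.mul_fin_two]
  have hQP : σ * mk (dQ p) (by simpa using hp0) * σ = mk (dP p) (by simpa using hp0) := by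
    refine Subtype.ext ?_
    show !![0,1;1,0] * dQ p * !![0,1;1,0] = dP p
    simp [dP, dQ, Matrix.mul_fin_two]
  rcases h.2.2 _ _ (hsplit.symm ▸ hmem) with hm | hm
  · exact ⟨hm, hPQ ▸ conj_mem h σ σ _ hm⟩
  · exact ⟨hQP ▸ conj_mem h σ σ _ hm, hm⟩

lemma det_dP_ne {p : ℕ} (hp : p.Prime) : (dP (p : ℤ)).det ≠ 0 := by
  simpa using Int.natCast_ne_zero.mpr hp.ne_zero

lemma det_dQ_ne {p : ℕ} (hp : p.Prime) : (dQ (p : ℤ)).det ≠ 0 := by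
  simpa using Int.natCast_ne_zero.mpr hp.ne_zero

/-- Main divisibility-implies-membership lemma. -/
lemma mem_of_dvd (h : IsPrimeIdeal 𝔮) (p : ℕ) (hp : p.Prime)
    (hP : mk (dP p) (det_dP_ne hp) ∈ 𝔮)
    (hQ : mk (dQ p) (det_dQ_ne hp) ∈ 𝔮)
    (A : M2ns) (hdvd : (p : ℤ) ∣ (A : Mat).det) : A ∈ 𝔮 := by
  haveI : Fact p.Prime := ⟨hp⟩
  obtain ⟨a, b, c, d, hAeq⟩ : ∃ a b c d : ℤ, (A : Mat) = !![a, b; c, d] :=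
    ⟨_, _, _, _, Matrix.eta_fin_two (A : Mat)⟩
  have hdet : (A : Mat).det = a * d - b * c := by rw [hAeq, Matrix.det_fin_two_of]
  have hdet0 : a * d - b * c ≠ 0 := hdet ▸ A.2
  rw [hdet] at hdvd
  by_cases hrow : (p : ℤ) ∣ a ∧ (p : ℤ) ∣ b
  · -- first row divisible by p
    obtain ⟨⟨a', rfl⟩, ⟨b', rfl⟩⟩ := hrow
    have hBdet : (!![a', b'; c, d] : Mat).det ≠ 0 := by
      rw [Matrix.det_fin_two_of]
      intro h0
      apply hdet0
      have hh : (p : ℤ) * (a' * d - b' * c) = (p:ℤ) * a' * d - (p:ℤ) * b' * c := by ring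
      rw [← hh, h0, mul_zero]
    have heq : mk (dP p) (det_dP_ne hp) * mk !![a', b'; c, d] hBdet = A := by
      refine Subtype.ext ?_
      show dP p * !![a', b'; c, d] = (A : Mat)
      rw [hAeq]
      simp [dP, Matrix.mul_fin_two]
    exact heq ▸ (h.2.1 (mk !![a', b'; c, d] hBdet) _ hP).2
  · -- find t with row2 ≡ t · row1 (mod p)
    have hdetp : ((a : ZMod p) * d - b * c) = 0 := by
      have hz := (ZMod.intCast_zmod_eq_zero_iff_dvd (a * d - b * c) p).mpr hdvd
      push_cast at hz
      exact hz
    have hab : ¬((a : ZMod p) = 0 ∧ (b : ZMod p) = 0) := by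
      intro ⟨h1, h2⟩
      exact hrow ⟨(ZMod.intCast_zmod_eq_zero_iff_dvd a p).mp h1,
        (ZMod.intCast_zmod_eq_zero_iff_dvd b p).mp h2⟩
    have hkey : ∃ tb : ZMod p, (c : ZMod p) = tb * a ∧ (d : ZMod p) = tb * b := by
      by_cases ha0 : (a : ZMod p) = 0
      · have hb0 : (b : ZMod p) ≠ 0 := fun hh => hab ⟨ha0, hh⟩
        refine ⟨d * (b : ZMod p)⁻¹, ?_, ?_⟩
        · have hbc : (b : ZMod p) * c = 0 := by
            have hh : (a : ZMod p) * d = (b : ZMod p) * c := by linear_combination hdetp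
            rw [← hh, ha0, zero_mul]
          have hc0 : (c : ZMod p) = 0 := by
            rcases mul_eq_zero.mp hbc with h' | h'
            · exact absurd h' hb0
            · exact h'
          rw [hc0, ha0, mul_zero]
        · exact (inv_mul_cancel_right₀ hb0 (d : ZMod p)).symm
      · have hh : (a : ZMod p) * d = (b : ZMod p) * c := by linear_combination hdetp
        refine ⟨c * (a : ZMod p)⁻¹, ?_, ?_⟩
        · exact (inv_mul_cancel_right₀ ha0 (c : ZMod p)).symm
        · calc (d : ZMod p) = (a : ZMod p)⁻¹ * ((a : ZMod p) * d) :=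
              (inv_mul_cancel_left₀ ha0 _).symm
            _ = (a : ZMod p)⁻¹ * ((b : ZMod p) * c) := by rw [hh]
            _ = (c : ZMod p) * (a : ZMod p)⁻¹ * (b : ZMod p) := by ring
    obtain ⟨tb, htc, htd⟩ := hkey
    obtain ⟨t, rfl⟩ := ZMod.intCast_surjective tb
    have hc' : (p : ℤ) ∣ c - t * a := by
      rw [← ZMod.intCast_zmod_eq_zero_iff_dvd]
      push_cast
      rw [htc]; ring
    have hd' : (p : ℤ) ∣ d - t * b := by
      rw [← ZMod.intCast_zmod_eq_zero_iff_dvd]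
      push_cast
      rw [htd]; ring
    obtain ⟨c', hcc⟩ := hc'
    obtain ⟨d', hdd⟩ := hd'
    have hBdet : (!![a, b; c', d'] : Mat).det ≠ 0 := by
      rw [Matrix.det_fin_two_of]
      intro h0
      apply hdet0
      have h1 : (p : ℤ) * (a * d' - b * c') = a * (d - t*b) - b * (c - t*a) := by
        linear_combination b * hcc - a * hdd
      have h2 : a * (d - t*b) - b * (c - t*a) = a * d - b * c := by ring
      rw [h0, mul_zero] at h1
      linarith
    have hLdet : (!![1, 0; t, 1] : Mat).det ≠ 0 := by norm_num [Matrix.det_fin_two_of]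
    have heq : mk !![1,0;t,1] hLdet *
        (mk (dQ p) (det_dQ_ne hp) * mk !![a, b; c', d'] hBdet) = A := by
      refine Subtype.ext ?_
      show !![1,0;t,1] * (dQ p * !![a, b; c', d']) = (A : Mat)
      rw [hAeq]
      ext i j
      fin_cases i <;> fin_cases j <;>
        simp [dQ, Matrix.mul_apply, Fin.sum_univ_two] <;>
        linarith [hcc, hdd]
    exact heq ▸ (h.2.1 _ _ ((h.2.1 _ _ hQ).2)).1

end M2nsAux

open M2nsAux Matrix in
/-- The prime ideals of the monoid of 2×2 integer matrices with nonzero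
determinant are exactly the sets of matrices whose determinant is divisible by
some prime from a fixed set `Σ` of prime numbers. -/
theorem primeIdeal_M2ns_iff (𝔮 : Set M2ns) :
    IsPrimeIdeal 𝔮 ↔
      ∃ Ps : Set ℕ, (∀ p ∈ Ps, Nat.Prime p) ∧
        𝔮 = {A : M2ns | ∃ p ∈ Ps, (p : ℤ) ∣ (A : Matrix (Fin 2) (Fin 2) ℤ).det} := by
  constructor
  · intro h
    refine ⟨{p : ℕ | p.Prime ∧ ∃ A ∈ 𝔮, (A : Mat) = scl (p : ℤ)}, fun p hp => hp.1, ?_⟩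
    ext A
    simp only [Set.mem_setOf_eq]
    constructor
    · intro hA
      obtain ⟨p, hp, hpd, hpm⟩ :=
        exists_prime_of_scl_mem h ((A : Mat).det.natAbs) _ rfl A.2 (scl_det_mem h A hA)
      exact ⟨p, ⟨hp, _, hpm, rfl⟩, hpd⟩
    · rintro ⟨p, ⟨hp, B, hB, hBeq⟩, hdvd⟩
      have hp0 : (p : ℤ) ≠ 0 := by exact_mod_cast hp.ne_zero
      have hscl : mk (scl (p:ℤ)) (det_scl_ne hp0) ∈ 𝔮 := mem_congr hBeq hB
      obtain ⟨hP, hQ⟩ := dP_dQ_mem h (p : ℤ) hp0 hscl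
      exact mem_of_dvd h p hp hP hQ A hdvd
  · rintro ⟨Ps, hPs, rfl⟩
    refine ⟨?_, ?_, ?_⟩
    · rintro ⟨p, hp, hdvd⟩
      have : ((1 : M2ns) : Mat).det = 1 := by simp
      rw [this] at hdvd
      have := Int.le_of_dvd one_pos hdvd
      have h2 : 2 ≤ (p : ℤ) := by exact_mod_cast (hPs p hp).two_le
      omega
    · intro m x ⟨p, hp, hdvd⟩
      constructor
      · exact ⟨p, hp, by rw [Submonoid.coe_mul, Matrix.det_mul]; exact hdvd.mul_left _⟩
      · exact ⟨p, hp, by rw [Submonoid.coe_mul, Matrix.det_mul]; exact hdvd.mul_right _⟩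
    · intro a b ⟨p, hp, hdvd⟩
      rw [Submonoid.coe_mul, Matrix.det_mul] at hdvd
      have hprime : Prime (p : ℤ) := Int.prime_iff_natAbs_prime.mpr (by simpa using hPs p hp)
      rcases hprime.dvd_mul.mp hdvd with h' | h'
      · exact Or.inl ⟨p, hp, h'⟩
      · exact Or.inr ⟨p, hp, h'⟩
end

section
/- Every 2×2 integer matrix A with det A ≠ 0 belongs to the submonoid of the multiplicative monoid of 2×2 integer matrices generated by the matrices of determinant 1 or −1 together with the diagonal matrices diag(1, p) for p a prime number. -/
/-!
Induct on `|det A|`. If a prime `p` divides `det A`, then `A mod p` has a nonzero kernel vector,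
which lifts, up to a scalar, to the second column of a unimodular `W`; the second column of
`A * W` is then divisible by `p`, so `A = C * diag(1, p) * W⁻¹` with `|det C| = |det A| / p`.
-/

open Matrix

lemma exists_eq_mul_diagonal_of_dvd {m n R : Type*} [CommSemiring R] [Fintype n] [DecidableEq n]
    {M : Matrix m n R} {d : n → R} (h : ∀ i j, d j ∣ M i j) :
    ∃ C : Matrix m n R, M = C * diagonal d := by
  choose C hC using h
  exact ⟨of C, by ext i j; rw [mul_diagonal, of_apply, hC, mul_comm]⟩

lemma eq_zero_and_eq_zero_or_exists_of_mul_sub_mul_eq_zero {K : Type*} [Field K] {a b c d : K}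
    (h : a * d - b * c = 0) : (a = 0 ∧ c = 0) ∨ ∃ t, a * t + b = 0 ∧ c * t + d = 0 := by
  by_cases ha : a = 0
  · subst ha
    by_cases hc : c = 0
    · exact Or.inl ⟨rfl, hc⟩
    · have hb : b = 0 := by simpa [hc] using h
      exact Or.inr ⟨-d / c, by simp [hb], by field_simp; ring⟩
  · refine Or.inr ⟨-b / a, by field_simp; ring, ?_⟩
    field_simp
    linear_combination h

lemma Int.dvd_and_dvd_or_exists_of_prime_dvd_mul_sub_mul {p : ℕ} (hp : p.Prime) {a b c d : ℤ}
    (h : (p : ℤ) ∣ a * d - b * c) :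
    ((p : ℤ) ∣ a ∧ (p : ℤ) ∣ c) ∨ ∃ t, (p : ℤ) ∣ a * t + b ∧ (p : ℤ) ∣ c * t + d := by
  have := Fact.mk hp
  simp_rw [← ZMod.intCast_zmod_eq_zero_iff_dvd] at h ⊢
  push_cast at h ⊢
  rcases eq_zero_and_eq_zero_or_exists_of_mul_sub_mul_eq_zero h with h | ⟨t, ht⟩
  · exact Or.inl h
  · obtain ⟨s, rfl⟩ := ZMod.intCast_surjective t
    exact Or.inr ⟨s, ht⟩

lemma exists_eq_mul_diagonal_mul_of_prime_dvd_det {p : ℕ} (hp : p.Prime)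
    {A : Matrix (Fin 2) (Fin 2) ℤ} (h : (p : ℤ) ∣ A.det) :
    ∃ C V : Matrix (Fin 2) (Fin 2) ℤ, (V.det = 1 ∨ V.det = -1) ∧
      A = C * diagonal ![1, (p : ℤ)] * V := by
  suffices ∃ W V : Matrix (Fin 2) (Fin 2) ℤ, W * V = 1 ∧ (V.det = 1 ∨ V.det = -1) ∧
      ∀ i, (p : ℤ) ∣ (A * W) i 1 by
    obtain ⟨W, V, hWV, hV, hcol⟩ := this
    obtain ⟨C, hC⟩ := exists_eq_mul_diagonal_of_dvd (M := A * W) (d := ![1, (p : ℤ)]) <| by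
      intro i j
      fin_cases j
      · exact one_dvd _
      · exact hcol i
    exact ⟨C, V, hV, by rw [← hC, Matrix.mul_assoc, hWV, Matrix.mul_one]⟩
  obtain ⟨a, b, c, d, rfl⟩ : ∃ a b c d, A = !![a, b; c, d] := ⟨_, _, _, _, A.eta_fin_two⟩
  rw [det_fin_two_of] at h
  rcases Int.dvd_and_dvd_or_exists_of_prime_dvd_mul_sub_mul hp h with ⟨ha, hc⟩ | ⟨t, hb, hd⟩
  · refine ⟨!![0, 1; 1, 0], !![0, 1; 1, 0], ?_, by simp, ?_⟩
    · simp [one_fin_two]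
    · intro i
      fin_cases i <;> simpa
  · refine ⟨!![1, t; 0, 1], !![1, -t; 0, 1], ?_, by simp, ?_⟩
    · simp [one_fin_two]
    · intro i
      fin_cases i <;> simpa [mul_comm]

theorem mem_submonoid_of_det_ne_zero {M : Submonoid (Matrix (Fin 2) (Fin 2) ℤ)}
    (hunimodular : ∀ B : Matrix (Fin 2) (Fin 2) ℤ, (B.det = 1 ∨ B.det = -1) → B ∈ M)
    (hdiagonal : ∀ p : ℕ, p.Prime → diagonal ![1, (p : ℤ)] ∈ M)
    {A : Matrix (Fin 2) (Fin 2) ℤ} (hA : A.det ≠ 0) : A ∈ M := by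
  induction hn : A.det.natAbs using Nat.strong_induction_on generalizing A with
  | _ n ih =>
  by_cases h1 : n = 1
  · exact hunimodular A (Int.natAbs_eq_iff.mp (hn.trans h1))
  obtain ⟨p, hp, hpn⟩ := Nat.exists_prime_and_dvd h1
  obtain ⟨C, V, hV, rfl⟩ :=
    exists_eq_mul_diagonal_mul_of_prime_dvd_det hp (Int.natCast_dvd.mpr (hn ▸ hpn))
  have hC : C.det ≠ 0 := fun h ↦ hA (by simp [h])
  have hdet : n = C.det.natAbs * p := by
    have hV' : V.det.natAbs = 1 := by rcases hV with h | h <;> simp [h]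
    simp [← hn, Int.natAbs_mul, hV']
  have hlt : C.det.natAbs < n := by
    have := hp.one_lt
    have := Int.natAbs_pos.mpr hC
    nlinarith
  exact mul_mem (mul_mem (ih _ hlt hC rfl) (hdiagonal p hp)) (hunimodular V hV)

/-- Every 2×2 integer matrix with nonzero determinant lies in the submonoid of
the multiplicative monoid of 2×2 integer matrices generated by the matrices of
determinant `1` or `-1` together with the diagonal matrices `diag(1, p)` for
`p` a prime number. -/
theorem matrix_mem_closure_units_and_diag_primes
    (A : Matrix (Fin 2) (Fin 2) ℤ) (hA : A.det ≠ 0) :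
    A ∈ Submonoid.closure
      ({B : Matrix (Fin 2) (Fin 2) ℤ | B.det = 1 ∨ B.det = -1} ∪
        {B : Matrix (Fin 2) (Fin 2) ℤ |
          ∃ p : ℕ, Nat.Prime p ∧ B = Matrix.diagonal ![1, (p : ℤ)]}) :=
  mem_submonoid_of_det_ne_zero (fun _ hB ↦ Submonoid.subset_closure (Or.inl hB))
    (fun p hp ↦ Submonoid.subset_closure (Or.inr ⟨p, hp, rfl⟩)) hA
end

section
/- Let k, l ≥ 2 be natural numbers and let M = ⟨a, b | aᵏ = bˡ⟩ be the torus knot monoid, i.e. the quotient of the free monoid on two generators a, b by the congruence generated by the single relation aᵏ = bˡ. Let H = ⟨a, b | aᵏ = 1, bˡ = 1⟩ be the presented group on generators a, b with relations aᵏ = bˡ = 1, and let deg : M → ℕ be the monoid homomorphism (into ℕ under addition) with deg(a) = l and deg(b) = k. Then the map M → ℕ × H sending m to (deg m, [m]), where [m] is the image of m under the canonical homomorphism M → H, is injective. -/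
/-- The congruence on the free monoid on two generators generated by the single
relation `a ^ k = b ^ l`, where `a = of 0` and `b = of 1`. -/
def torusKnotCon (k l : ℕ) : Con (FreeMonoid (Fin 2)) :=
  conGen fun x y =>
    x = FreeMonoid.of (0 : Fin 2) ^ k ∧ y = FreeMonoid.of (1 : Fin 2) ^ l

/-- The torus knot monoid `⟨a, b | a^k = b^l⟩`. -/
abbrev TorusKnotMonoid (k l : ℕ) := (torusKnotCon k l).Quotient

/-- The generator `a` of the torus knot monoid. -/
def tkA (k l : ℕ) : TorusKnotMonoid k l := (torusKnotCon k l).mk' (FreeMonoid.of 0)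

/-- The generator `b` of the torus knot monoid. -/
def tkB (k l : ℕ) : TorusKnotMonoid k l := (torusKnotCon k l).mk' (FreeMonoid.of 1)

/-- The group `H = ⟨a, b | a^k = 1, b^l = 1⟩`. -/
abbrev TorusKnotQuotientGroup (k l : ℕ) :=
  PresentedGroup ({FreeGroup.of (0 : Fin 2) ^ k, FreeGroup.of (1 : Fin 2) ^ l} :
    Set (FreeGroup (Fin 2)))

/-!
Write `Δ = a ^ k = b ^ l`; it is central, since it is a power of each generator. Every element of
`M` is `Δ ^ j` times an alternating product of syllables `aᵉ` (`0 < e < k`) and `bᵉ`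
(`0 < e < l`): this shape survives left multiplication by a generator, a syllable that overflows
being absorbed into `Δ`. Mapping `H` to the free product `ℤ/k ∗ ℤ/l`, the syllables become a
reduced word, so `[m]` determines them; then `deg m = j k l + deg (syllables)` determines `j`.
-/

open Monoid

section SyllableWords

variable {ι G : Type*} [Monoid G] (n : ι → ℕ)

/-- A syllable `(i, e)` stands for `xᵢ ^ e`. -/
def syllableProd (x : ι → G) (w : List (ι × ℕ)) : G :=
  (w.map fun s => x s.1 ^ s.2).prod

@[simp]
lemma syllableProd_nil (x : ι → G) : syllableProd x [] = 1 := rfl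

@[simp]
lemma syllableProd_cons (x : ι → G) (s : ι × ℕ) (w : List (ι × ℕ)) :
    syllableProd x (s :: w) = x s.1 ^ s.2 * syllableProd x w := rfl

lemma map_syllableProd {H : Type*} [Monoid H] (f : G →* H) (x : ι → G)
    (w : List (ι × ℕ)) : f (syllableProd x w) = syllableProd (f ∘ x) w := by
  simp [syllableProd, map_list_prod, Function.comp_def]

def IsReducedSyllables (w : List (ι × ℕ)) : Prop :=
  w.IsChain (fun s t => s.1 ≠ t.1) ∧ ∀ s ∈ w, 0 < s.2 ∧ s.2 < n s.1

variable {n}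

@[simp]
lemma isReducedSyllables_nil : IsReducedSyllables n [] := ⟨.nil, by simp⟩

lemma isReducedSyllables_cons {s : ι × ℕ} {w : List (ι × ℕ)} :
    IsReducedSyllables n (s :: w) ↔
      (∀ t ∈ w.head?, s.1 ≠ t.1) ∧ (0 < s.2 ∧ s.2 < n s.1) ∧ IsReducedSyllables n w := by
  simp only [IsReducedSyllables, List.isChain_cons, List.forall_mem_cons]
  tauto

/-- A syllable reaching the exponent `n i` is absorbed into `δ`. -/
lemma IsReducedSyllables.exists_mul_syllableProd [DecidableEq ι] {x : ι → G} {δ : G}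
    (hx : ∀ i, x i ^ n i = δ) {i : ι} (hi : 1 < n i) {w : List (ι × ℕ)}
    (hw : IsReducedSyllables n w) :
    ∃ j w', IsReducedSyllables n w' ∧ x i * syllableProd x w = δ ^ j * syllableProd x w' := by
  match w, hw with
  | [], _ => exact ⟨0, [(i, 1)], by simp [isReducedSyllables_cons, hi], by simp⟩
  | (i', e) :: rest, hw =>
    obtain ⟨hhead, ⟨-, hen⟩, hrest⟩ := isReducedSyllables_cons.mp hw
    dsimp only at hen
    by_cases hii' : i' = i
    · subst hii'
      by_cases he : e + 1 = n i'
      · refine ⟨1, rest, hrest, ?_⟩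
        rw [syllableProd_cons, ← mul_assoc, ← pow_succ', he, hx, pow_one]
      · refine ⟨0, (i', e + 1) :: rest, ?_, ?_⟩
        · refine isReducedSyllables_cons.mpr ⟨hhead, ⟨e.succ_pos, ?_⟩, hrest⟩
          dsimp only
          omega
        · simp [← mul_assoc, pow_succ']
    · refine ⟨0, (i, 1) :: (i', e) :: rest, ?_, by simp⟩
      exact isReducedSyllables_cons.mpr ⟨by simpa [eq_comm] using hii', ⟨one_pos, hi⟩, hw⟩

lemma exists_eq_pow_mul_syllableProd [DecidableEq ι] {x : ι → G} {δ : G}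
    (hx : ∀ i, x i ^ n i = δ) (hn : ∀ i, 1 < n i)
    (hgen : Submonoid.closure (Set.range x) = ⊤)
    (g : G) : ∃ j w, IsReducedSyllables n w ∧ g = δ ^ j * syllableProd x w := by
  have hg : g ∈ Submonoid.closure (Set.range x) := hgen ▸ Submonoid.mem_top g
  induction hg using Submonoid.closure_induction_left with
  | one => exact ⟨0, [], isReducedSyllables_nil, by simp⟩
  | mul_left _ hy _ _ ih =>
    obtain ⟨i, rfl⟩ := hy
    obtain ⟨j, w, hw, rfl⟩ := ih
    obtain ⟨j', w', hw', hmul⟩ := hw.exists_mul_syllableProd hx (hn i)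
    refine ⟨j' + j, w', hw', ?_⟩
    have hcomm : Commute (x i) (δ ^ j) := ((hx i) ▸ Commute.self_pow (x i) (n i)).pow_right j
    rw [← mul_assoc, hcomm.eq, mul_assoc, hmul, ← mul_assoc, ← pow_add, add_comm]

end SyllableWords

section FreeProductOfCyclic

variable {ι : Type*} (n : ι → ℕ)

def cyclicGen (i : ι) : CoprodI fun i => Multiplicative (ZMod (n i)) :=
  CoprodI.of (i := i) (Multiplicative.ofAdd 1)

lemma cyclicGen_pow (i : ι) (e : ℕ) :
    cyclicGen n i ^ e = CoprodI.of (i := i) (Multiplicative.ofAdd (e : ZMod (n i))) := by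
  rw [cyclicGen, ← map_pow, ← ofAdd_nsmul, nsmul_one]

lemma cyclicGen_pow_self (i : ι) : cyclicGen n i ^ n i = 1 := by
  rw [cyclicGen_pow, ZMod.natCast_self, ofAdd_zero, map_one]

variable {n}

def IsReducedSyllables.toWord {w : List (ι × ℕ)} (hw : IsReducedSyllables n w) :
    CoprodI.Word fun i => Multiplicative (ZMod (n i)) where
  toList := w.map fun s => ⟨s.1, Multiplicative.ofAdd (s.2 : ZMod (n s.1))⟩
  ne_one := by
    simp only [List.mem_map, forall_exists_index, and_imp]
    rintro _ s hs rfl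
    obtain ⟨hpos, hlt⟩ := hw.2 s hs
    rw [Ne, ofAdd_eq_one, ZMod.natCast_eq_zero_iff]
    exact fun hdvd => (Nat.eq_zero_of_dvd_of_lt hdvd hlt).not_gt hpos
  chain_ne := List.isChain_map _ |>.mpr hw.1

lemma IsReducedSyllables.toWord_prod {w : List (ι × ℕ)} (hw : IsReducedSyllables n w) :
    hw.toWord.prod = syllableProd (cyclicGen n) w := by
  simp only [CoprodI.Word.prod, IsReducedSyllables.toWord, syllableProd, cyclicGen_pow,
    List.map_map]
  rfl

lemma IsReducedSyllables.map_toWord_toList {w : List (ι × ℕ)} (hw : IsReducedSyllables n w) :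
    hw.toWord.toList.map (fun x => (x.1, (Multiplicative.toAdd x.2).val)) = w := by
  conv_rhs => rw [← w.map_id]
  simp only [IsReducedSyllables.toWord, List.map_map]
  exact List.map_congr_left fun s hs => Prod.ext rfl (ZMod.val_cast_of_lt (hw.2 s hs).2)

lemma IsReducedSyllables.eq_of_syllableProd_eq [DecidableEq ι] {w w' : List (ι × ℕ)}
    (hw : IsReducedSyllables n w) (hw' : IsReducedSyllables n w')
    (h : syllableProd (cyclicGen n) w = syllableProd (cyclicGen n) w') : w = w' := by
  have hprod : hw.toWord.prod = hw'.toWord.prod := by rw [hw.toWord_prod, hw'.toWord_prod, h]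
  have hword : hw.toWord = hw'.toWord := CoprodI.Word.equiv.symm.injective hprod
  rw [← hw.map_toWord_toList, ← hw'.map_toWord_toList, hword]

end FreeProductOfCyclic

namespace TorusKnotMonoid

variable {k l : ℕ}

def gen (c : Fin 2) : TorusKnotMonoid k l := (torusKnotCon k l).mk' (FreeMonoid.of c)

def delta : TorusKnotMonoid k l := tkA k l ^ k

lemma gen_pow (c : Fin 2) : gen c ^ ![k, l] c = (delta : TorusKnotMonoid k l) := by
  fin_cases c
  · rfl
  · show (torusKnotCon k l).mk' (.of 1) ^ l = (torusKnotCon k l).mk' (.of 0) ^ k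
    rw [← map_pow, ← map_pow]
    exact ((torusKnotCon k l).eq.mpr (ConGen.Rel.of _ _ ⟨rfl, rfl⟩)).symm

lemma closure_range_gen :
    Submonoid.closure (Set.range (gen : Fin 2 → TorusKnotMonoid k l)) = ⊤ := by
  show Submonoid.closure (Set.range ((torusKnotCon k l).mk' ∘ FreeMonoid.of)) = ⊤
  rw [Set.range_comp, ← MonoidHom.map_mclosure, FreeMonoid.closure_range_of,
    ← MonoidHom.mrange_eq_map, MonoidHom.mrange_eq_top]
  exact (torusKnotCon k l).mk'_surjective

lemma exists_eq_delta_pow_mul (hk : 2 ≤ k) (hl : 2 ≤ l) (m : TorusKnotMonoid k l) :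
    ∃ j w, IsReducedSyllables ![k, l] w ∧ m = delta ^ j * syllableProd gen w :=
  exists_eq_pow_mul_syllableProd gen_pow (fun c => by fin_cases c <;> simp <;> omega)
    closure_range_gen m

lemma toAdd_deg_delta_pow_mul (deg : TorusKnotMonoid k l →* Multiplicative ℕ)
    (hdegA : deg (tkA k l) = Multiplicative.ofAdd l) (j : ℕ) (m : TorusKnotMonoid k l) :
    Multiplicative.toAdd (deg (delta ^ j * m)) = j * (k * l) + Multiplicative.toAdd (deg m) := by
  simp [delta, hdegA]

def toFreeProduct :
    TorusKnotQuotientGroup k l →* CoprodI fun c => Multiplicative (ZMod (![k, l] c)) :=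
  PresentedGroup.toGroup (f := cyclicGen ![k, l]) <| by
    rintro r (rfl | rfl) <;> rw [map_pow, FreeGroup.lift_apply_of]
    exacts [cyclicGen_pow_self _ 0, cyclicGen_pow_self _ 1]

lemma toFreeProduct_of (c : Fin 2) :
    toFreeProduct (PresentedGroup.of c) = cyclicGen ![k, l] c :=
  PresentedGroup.toGroup.of _

lemma toFreeProduct_delta_pow_mul (π : TorusKnotMonoid k l →* TorusKnotQuotientGroup k l)
    (hπA : π (tkA k l) = PresentedGroup.of 0) (hπB : π (tkB k l) = PresentedGroup.of 1)
    (j : ℕ) (w : List (Fin 2 × ℕ)) :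
    toFreeProduct (π (delta ^ j * syllableProd gen w)) = syllableProd (cyclicGen ![k, l]) w := by
  have hgen : toFreeProduct.comp π ∘ gen = cyclicGen ![k, l] := by
    funext c
    fin_cases c
    · exact congrArg toFreeProduct hπA |>.trans (toFreeProduct_of 0)
    · exact congrArg toFreeProduct hπB |>.trans (toFreeProduct_of 1)
  have hdelta : toFreeProduct.comp π delta = 1 := by
    rw [← gen_pow 0, map_pow, ← Function.comp_apply (f := toFreeProduct.comp π), hgen,
      cyclicGen_pow_self]
  rw [← MonoidHom.comp_apply, map_mul, map_pow, hdelta, one_pow, one_mul, map_syllableProd, hgen]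

end TorusKnotMonoid

open TorusKnotMonoid in
theorem torusKnotMonoid_deg_class_injective_general (k l : ℕ) (hk : 2 ≤ k) (hl : 2 ≤ l)
    (deg : TorusKnotMonoid k l →* Multiplicative ℕ)
    (hdegA : deg (tkA k l) = Multiplicative.ofAdd l)
    (π : TorusKnotMonoid k l →* TorusKnotQuotientGroup k l)
    (hπA : π (tkA k l) = PresentedGroup.of 0)
    (hπB : π (tkB k l) = PresentedGroup.of 1) :
    Function.Injective
      (fun m : TorusKnotMonoid k l => (Multiplicative.toAdd (deg m), π m)) := by
  intro m m' h
  obtain ⟨j, w, hw, rfl⟩ := exists_eq_delta_pow_mul hk hl m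
  obtain ⟨j', w', hw', rfl⟩ := exists_eq_delta_pow_mul hk hl m'
  obtain ⟨hdeg, hπ⟩ := Prod.mk.inj h
  obtain rfl : w = w' := hw.eq_of_syllableProd_eq hw' <| by
    rw [← toFreeProduct_delta_pow_mul π hπA hπB j, ← toFreeProduct_delta_pow_mul π hπA hπB j',
      hπ]
  rw [toAdd_deg_delta_pow_mul deg hdegA, toAdd_deg_delta_pow_mul deg hdegA] at hdeg
  obtain rfl : j = j' := Nat.eq_of_mul_eq_mul_right (by positivity) (Nat.add_right_cancel hdeg)
  rfl

/-- For `k, l ≥ 2`, the map `m ↦ (deg m, [m])` from the torus knot monoid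
`M = ⟨a, b | a^k = b^l⟩` to `ℕ × H`, where `deg` is the monoid homomorphism to
`ℕ` (under addition) with `deg a = l`, `deg b = k`, and `[m]` is the image of
`m` under the canonical homomorphism to `H = ⟨a, b | a^k = b^l = 1⟩`, is
injective. -/
theorem torusKnotMonoid_deg_class_injective (k l : ℕ) (hk : 2 ≤ k) (hl : 2 ≤ l)
    (deg : TorusKnotMonoid k l →* Multiplicative ℕ)
    (hdegA : deg (tkA k l) = Multiplicative.ofAdd l)
    (hdegB : deg (tkB k l) = Multiplicative.ofAdd k)
    (π : TorusKnotMonoid k l →* TorusKnotQuotientGroup k l)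
    (hπA : π (tkA k l) = PresentedGroup.of 0)
    (hπB : π (tkB k l) = PresentedGroup.of 1) :
    Function.Injective
      (fun m : TorusKnotMonoid k l => (Multiplicative.toAdd (deg m), π m)) :=
  torusKnotMonoid_deg_class_injective_general k l hk hl deg hdegA π hπA hπB
end

section
/- Let k, l ≥ 2 be natural numbers, let M = ⟨a, b | aᵏ = bˡ⟩ be the torus knot monoid, and set c = aᵏ (= bˡ) in M. Then for every m ∈ M, the set {λ ∈ ℕ : there exists x ∈ M with m = x * c^λ} is nonempty and has a greatest element; i.e. there is a greatest λ ∈ ℕ with m ∈ M·c^λ. -/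
section Weight

variable {M : Type*} [Monoid M]

theorem le_toAdd_of_eq_mul_pow (w : M →* Multiplicative ℕ) {c : M} (hc : w c ≠ 1)
    {m x : M} {n : ℕ} (h : m = x * c ^ n) : n ≤ (w m).toAdd := by
  have hpos : 1 ≤ (w c).toAdd := Nat.one_le_iff_ne_zero.mpr hc
  calc n ≤ n * (w c).toAdd := Nat.le_mul_of_pos_right n hpos
    _ ≤ (w x).toAdd + n * (w c).toAdd := Nat.le_add_left _ _
    _ = (w m).toAdd := by simp [h]

theorem bddAbove_setOf_eq_mul_pow (w : M →* Multiplicative ℕ) {c : M} (hc : w c ≠ 1) (m : M) :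
    BddAbove {n : ℕ | ∃ x : M, m = x * c ^ n} :=
  ⟨(w m).toAdd, fun _ ⟨_, h⟩ => le_toAdd_of_eq_mul_pow w hc h⟩

end Weight

def torusKnotWeightFree (k l : ℕ) : FreeMonoid (Fin 2) →* Multiplicative ℕ :=
  FreeMonoid.lift fun i => Multiplicative.ofAdd (if i = 0 then l else k)

theorem torusKnotCon_le_ker_weightFree (k l : ℕ) :
    torusKnotCon k l ≤ Con.ker (torusKnotWeightFree k l) := by
  refine Con.conGen_le.mpr ?_
  rintro _ _ ⟨rfl, rfl⟩
  show torusKnotWeightFree k l _ = torusKnotWeightFree k l _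
  simp only [torusKnotWeightFree, map_pow, FreeMonoid.lift_eval_of]
  rw [if_pos trivial, if_neg (by decide), ← ofAdd_nsmul, ← ofAdd_nsmul, smul_eq_mul, smul_eq_mul,
    mul_comm]

def torusKnotWeight (k l : ℕ) : TorusKnotMonoid k l →* Multiplicative ℕ :=
  Con.lift _ (torusKnotWeightFree k l) (torusKnotCon_le_ker_weightFree k l)

theorem torusKnotWeight_tkA_pow (k l : ℕ) :
    torusKnotWeight k l (tkA k l ^ k) = Multiplicative.ofAdd (k * l) := by
  simp only [torusKnotWeight, tkA, map_pow, Con.lift_mk', torusKnotWeightFree,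
    FreeMonoid.lift_eval_of, if_pos]
  rw [← ofAdd_nsmul, smul_eq_mul]

/-- For `k, l ≥ 2` and `c = a^k` in the torus knot monoid `⟨a, b | a^k = b^l⟩`,
for every element `m` the set of `λ ∈ ℕ` with `m ∈ M·c^λ` is nonempty and has a
greatest element. -/
theorem torusKnotMonoid_level_exists (k l : ℕ) (hk : 2 ≤ k) (hl : 2 ≤ l)
    (m : TorusKnotMonoid k l) :
    {lam : ℕ | ∃ x : TorusKnotMonoid k l, m = x * (tkA k l ^ k) ^ lam}.Nonempty ∧
    ∃ lam ∈ {lam : ℕ | ∃ x : TorusKnotMonoid k l, m = x * (tkA k l ^ k) ^ lam},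
      ∀ μ ∈ {lam : ℕ | ∃ x : TorusKnotMonoid k l, m = x * (tkA k l ^ k) ^ lam},
        μ ≤ lam := by
  set S := {lam : ℕ | ∃ x : TorusKnotMonoid k l, m = x * (tkA k l ^ k) ^ lam}
  have hne : S.Nonempty := ⟨0, m, by simp⟩
  have hc : torusKnotWeight k l (tkA k l ^ k) ≠ 1 := by
    rw [torusKnotWeight_tkA_pow, Ne, ofAdd_eq_one]
    exact Nat.mul_ne_zero (by omega) (by omega)
  have hbdd : BddAbove S := bddAbove_setOf_eq_mul_pow _ hc m
  exact ⟨hne, sSup S, Nat.sSup_mem hne hbdd, fun _ hμ => le_csSup hbdd hμ⟩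
end

section
/- Let k, l ≥ 2 be natural numbers and let M = ⟨a, b | aᵏ = bˡ⟩ be the torus knot monoid. A subset 𝔭 ⊆ M is a prime ideal if and only if 𝔭 = ∅ or 𝔭 = {m ∈ M : m ≠ 1}; in particular M has exactly two prime ideals. -/
/-! The monoid is generated by `a` and `b`. The complement of a prime ideal is a submonoid, so a
nonempty prime ideal contains `a` or `b`; since `a ^ k = b ^ l` and ideals are closed under
powers and prime ideals under roots, it then contains both generators, hence every element
other than `1`. Conversely, the weight homomorphism `a ↦ l`, `b ↦ k` into `(ℕ, +)` shows that
`1` is not a product of non-identity elements, so the elements other than `1` form a prime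
ideal. -/

namespace IsPrimeIdeal

variable {M : Type*} [Monoid M] {𝔭 : Set M}

theorem mul_mem_right (hP : IsPrimeIdeal 𝔭) {x : M} (hx : x ∈ 𝔭) (m : M) : x * m ∈ 𝔭 :=
  (hP.2.1 m x hx).2

theorem pow_mem_iff (hP : IsPrimeIdeal 𝔭) {x : M} {n : ℕ} (hn : n ≠ 0) :
    x ^ n ∈ 𝔭 ↔ x ∈ 𝔭 := by
  induction n with
  | zero => exact absurd rfl hn
  | succ n ih =>
    rcases eq_or_ne n 0 with rfl | hn'
    · simp
    rw [pow_succ]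
    exact ⟨fun h => (hP.2.2 _ _ h).elim (ih hn').1 id,
      fun hx => hP.mul_mem_right ((ih hn').2 hx) x⟩

def complSubmonoid (hP : IsPrimeIdeal 𝔭) : Submonoid M where
  carrier := 𝔭ᶜ
  one_mem' := hP.1
  mul_mem' {x y} hx hy hxy := (hP.2.2 x y hxy).elim hx hy

theorem exists_mem_of_closure_eq_top (hP : IsPrimeIdeal 𝔭) {s : Set M}
    (hs : Submonoid.closure s = ⊤) (hne : 𝔭.Nonempty) : ∃ g ∈ s, g ∈ 𝔭 := by
  by_contra! h
  obtain ⟨x, hx⟩ := hne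
  have hle : Submonoid.closure s ≤ hP.complSubmonoid := Submonoid.closure_le.2 h
  exact hle (hs ▸ Submonoid.mem_top x) hx

theorem eq_setOf_ne_one_of_subset (hP : IsPrimeIdeal 𝔭) {s : Set M}
    (hs : Submonoid.closure s = ⊤) (hs𝔭 : s ⊆ 𝔭) : 𝔭 = {m | m ≠ 1} := by
  have one_or_mem (m : M) : m = 1 ∨ m ∈ 𝔭 := by
    have hm : m ∈ Submonoid.closure s := hs ▸ Submonoid.mem_top m
    induction hm using Submonoid.closure_induction with
    | mem x hx => exact .inr (hs𝔭 hx)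
    | one => exact .inl rfl
    | mul x y _ _ hx hy =>
      rcases hx with rfl | hx
      · simpa using hy
      · exact .inr (hP.mul_mem_right hx y)
  ext m
  exact ⟨fun hm h => hP.1 (h ▸ hm), (one_or_mem m).resolve_left⟩

end IsPrimeIdeal

theorem isPrimeIdeal_empty {M : Type*} [Monoid M] : IsPrimeIdeal (∅ : Set M) := by
  simp [IsPrimeIdeal]

theorem isPrimeIdeal_setOf_ne_one {M : Type*} [Monoid M]
    (h : ∀ x y : M, x * y = 1 → x = 1 ∧ y = 1) : IsPrimeIdeal {m : M | m ≠ 1} :=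
  ⟨fun h1 => h1 rfl,
    fun m x hx => ⟨fun hmx => hx (h m x hmx).2, fun hxm => hx (h x m hxm).1⟩,
    fun x y hxy => not_and_or.1 fun ⟨hx, hy⟩ => hxy (by rw [hx, hy, one_mul])⟩

namespace TorusKnotMonoid

variable {k l : ℕ}

def a : TorusKnotMonoid k l := (FreeMonoid.of 0 : FreeMonoid (Fin 2))

def b : TorusKnotMonoid k l := (FreeMonoid.of 1 : FreeMonoid (Fin 2))

theorem a_pow_eq_b_pow : (a : TorusKnotMonoid k l) ^ k = b ^ l :=
  (Con.eq _).2 (ConGen.Rel.of _ _ ⟨rfl, rfl⟩)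

theorem closure_a_b : Submonoid.closure {a, b} = (⊤ : Submonoid (TorusKnotMonoid k l)) := by
  rw [← Con.mrange_mk', MonoidHom.mrange_eq_map, ← FreeMonoid.closure_range_of,
    MonoidHom.map_mclosure, ← Set.range_comp]
  congr 1
  ext x
  simp [Fin.exists_fin_two, a, b, eq_comm]

def weight : TorusKnotMonoid k l →* Multiplicative ℕ :=
  (torusKnotCon k l).lift (FreeMonoid.lift ![Multiplicative.ofAdd l, Multiplicative.ofAdd k]) <|
    Con.conGen_le.2 <| by
      rintro _ _ ⟨rfl, rfl⟩
      rw [Con.ker_rel, map_pow, map_pow, FreeMonoid.lift_eval_of, FreeMonoid.lift_eval_of]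
      show Multiplicative.ofAdd l ^ k = Multiplicative.ofAdd k ^ l
      rw [← ofAdd_nsmul, ← ofAdd_nsmul, smul_eq_mul, smul_eq_mul, mul_comm]

@[simp]
theorem toAdd_weight_a : (weight (a : TorusKnotMonoid k l)).toAdd = l :=
  rfl

@[simp]
theorem toAdd_weight_b : (weight (b : TorusKnotMonoid k l)).toAdd = k :=
  rfl

theorem eq_one_of_toAdd_weight_eq_zero (hk : k ≠ 0) (hl : l ≠ 0) {x : TorusKnotMonoid k l}
    (hx : (weight x).toAdd = 0) : x = 1 := by
  have hx' : x ∈ Submonoid.closure {a, b} := closure_a_b ▸ Submonoid.mem_top x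
  induction hx' using Submonoid.closure_induction with
  | mem g hg =>
    rcases hg with rfl | rfl <;> simp only [toAdd_weight_a, toAdd_weight_b] at hx <;> contradiction
  | one => rfl
  | mul x y _ _ ihx ihy =>
    simp only [map_mul, toAdd_mul, Nat.add_eq_zero_iff] at hx
    rw [ihx hx.1, ihy hx.2, one_mul]

theorem eq_one_of_mul_eq_one (hk : k ≠ 0) (hl : l ≠ 0) {x y : TorusKnotMonoid k l}
    (h : x * y = 1) : x = 1 ∧ y = 1 := by
  have hw := congrArg (fun m => (weight m).toAdd) h
  simp only [map_mul, toAdd_mul, map_one, toAdd_one, Nat.add_eq_zero_iff] at hw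
  exact ⟨eq_one_of_toAdd_weight_eq_zero hk hl hw.1, eq_one_of_toAdd_weight_eq_zero hk hl hw.2⟩

theorem a_mem_iff_b_mem (hk : k ≠ 0) (hl : l ≠ 0) {𝔭 : Set (TorusKnotMonoid k l)}
    (hP : IsPrimeIdeal 𝔭) : a ∈ 𝔭 ↔ b ∈ 𝔭 := by
  rw [← hP.pow_mem_iff hk, a_pow_eq_b_pow, hP.pow_mem_iff hl]

end TorusKnotMonoid

/-- For `k, l ≥ 2`, the torus knot monoid `M = ⟨a, b | a^k = b^l⟩` has exactly
two prime ideals: the empty set and `M - {1}`. -/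
theorem torusKnotMonoid_primeIdeals (k l : ℕ) (hk : 2 ≤ k) (hl : 2 ≤ l)
    (𝔭 : Set (TorusKnotMonoid k l)) :
    IsPrimeIdeal 𝔭 ↔ 𝔭 = ∅ ∨ 𝔭 = {m : TorusKnotMonoid k l | m ≠ 1} := by
  have hk0 : k ≠ 0 := by omega
  have hl0 : l ≠ 0 := by omega
  constructor
  · intro hP
    refine 𝔭.eq_empty_or_nonempty.imp id fun hne =>
      hP.eq_setOf_ne_one_of_subset TorusKnotMonoid.closure_a_b ?_
    have hab := TorusKnotMonoid.a_mem_iff_b_mem hk0 hl0 hP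
    obtain ⟨g, hg, hg𝔭⟩ := hP.exists_mem_of_closure_eq_top TorusKnotMonoid.closure_a_b hne
    rcases hg with rfl | rfl
    · exact Set.pair_subset hg𝔭 (hab.1 hg𝔭)
    · exact Set.pair_subset (hab.2 hg𝔭) hg𝔭
  · rintro (rfl | rfl)
    · exact isPrimeIdeal_empty
    · exact isPrimeIdeal_setOf_ne_one fun _ _ => TorusKnotMonoid.eq_one_of_mul_eq_one hk0 hl0
end

section
/- Let k, l ≥ 2 be natural numbers and let M = ⟨a, b | aᵏ = bˡ⟩ be the torus knot monoid. Then M is right Ore (with respect to itself): for all m, s ∈ M there exist t, n ∈ M with m*t = s*n. -/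
section Monoid

variable {M : Type*} [Monoid M]

theorem commute_and_exists_dvd_pow_of_mem_closure {S : Set M} {c : M}
    (hcomm : ∀ x ∈ S, Commute x c) (hdvd : ∀ x ∈ S, x ∣ c) {m : M}
    (hm : m ∈ Submonoid.closure S) : Commute m c ∧ ∃ N, m ∣ c ^ N := by
  induction hm using Submonoid.closure_induction with
  | mem x hx => exact ⟨hcomm x hx, 1, by simpa using hdvd x hx⟩
  | one => exact ⟨Commute.one_left c, 0, one_dvd _⟩
  | mul x y _ _ hx hy =>
    obtain ⟨hxc, N, t, ht⟩ := hx
    obtain ⟨hyc, N', t', ht'⟩ := hy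
    refine ⟨hxc.mul_left hyc, N' + N, t' * t, ?_⟩
    calc c ^ (N' + N) = c ^ N' * (x * t) := by rw [pow_add, ht]
      _ = x * c ^ N' * t := by rw [← mul_assoc, (hxc.pow_right N').eq]
      _ = x * y * (t' * t) := by rw [ht']; simp only [mul_assoc]

theorem exists_mul_eq_mul_of_forall_dvd_pow {c : M} (h : ∀ m : M, ∃ N, m ∣ c ^ N) (m s : M) :
    ∃ t n, m * t = s * n := by
  obtain ⟨N, t, ht⟩ := h m
  obtain ⟨N', n, hn⟩ := h s
  refine ⟨t * c ^ N', n * c ^ N, ?_⟩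
  rw [← mul_assoc, ← ht, ← mul_assoc, ← hn, ← pow_add, ← pow_add, add_comm]

end Monoid

namespace TorusKnotMonoid

def of (k l : ℕ) (i : Fin 2) : TorusKnotMonoid k l := (torusKnotCon k l).mk' (FreeMonoid.of i)

theorem of_zero_pow_eq_of_one_pow (k l : ℕ) : of k l 0 ^ k = of k l 1 ^ l := by
  rw [of, of, ← map_pow, ← map_pow]
  exact (Con.eq _).2 (ConGen.Rel.of _ _ ⟨rfl, rfl⟩)

theorem closure_range_of (k l : ℕ) : Submonoid.closure (Set.range (of k l)) = ⊤ := by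
  change Submonoid.closure (Set.range ((torusKnotCon k l).mk' ∘ FreeMonoid.of)) = ⊤
  rw [Set.range_comp, ← MonoidHom.map_mclosure, FreeMonoid.closure_range_of,
    ← MonoidHom.mrange_eq_map]
  exact MonoidHom.mrange_eq_top_of_surjective _ Con.mk'_surjective

theorem commute_of_of_zero_pow (k l : ℕ) (i : Fin 2) : Commute (of k l i) (of k l 0 ^ k) := by
  fin_cases i
  · exact Commute.self_pow _ _
  · rw [of_zero_pow_eq_of_one_pow]
    exact Commute.self_pow _ _

theorem of_dvd_of_zero_pow {k l : ℕ} (hk : k ≠ 0) (hl : l ≠ 0) (i : Fin 2) :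
    of k l i ∣ of k l 0 ^ k := by
  fin_cases i
  · exact dvd_pow_self _ hk
  · rw [of_zero_pow_eq_of_one_pow]
    exact dvd_pow_self _ hl

end TorusKnotMonoid

/-- For `k, l ≥ 2`, the torus knot monoid `⟨a, b | a^k = b^l⟩` is right Ore
with respect to itself. -/
theorem torusKnotMonoid_rightOre (k l : ℕ) (hk : 2 ≤ k) (hl : 2 ≤ l) :
    ∀ m s : TorusKnotMonoid k l, ∃ t n : TorusKnotMonoid k l, m * t = s * n := by
  have hdvd_pow (m : TorusKnotMonoid k l) : ∃ N, m ∣ (TorusKnotMonoid.of k l 0 ^ k) ^ N :=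
    (commute_and_exists_dvd_pow_of_mem_closure
      (Set.forall_mem_range.2 (TorusKnotMonoid.commute_of_of_zero_pow k l))
      (Set.forall_mem_range.2 (TorusKnotMonoid.of_dvd_of_zero_pow (by omega) (by omega)))
      (TorusKnotMonoid.closure_range_of k l ▸ Submonoid.mem_top m)).2
  exact exists_mul_eq_mul_of_forall_dvd_pow hdvd_pow
end
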